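/- For the Fibonacci word f, the Lie complexity satisfies: L_f(n) = 1 if n = 0, or n = F_k for some k ≥ 4, or n = 2F_{k−1} for some k ≥ 4; L_f(n) = 2 if n = 1 or n = 2; and L_f(n) = 0 otherwise, where F_1 = F_2 = 1 and F_n = F_{n−1} + F_{n−2}. -/

import Mathlib

/-- `u` is a factor of the right-infinite word `w`. -/
def IsFactor {α : Type*} (w : ℕ → α) (u : List α) : Prop :=
  ∃ i : ℕ, u = (List.range u.length).map fun j => w (i + j)

/-- Factor complexity: the number of factors of `w` of length `n`. -/
noncomputable def factorComplexity {α : Type*} (w : ℕ → α) (n : ℕ) : ℕ :=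
  Set.ncard {u : List α | u.length = n ∧ IsFactor w u}

/-- The conjugacy (rotation) class of a finite word. -/
def conjClass {α : Type*} (u : List α) : Set (List α) :=
  {v | ∃ i : ℕ, v = u.rotate i}

/-- Lie complexity: the number of conjugacy classes of words of length `n`
all of whose elements are factors of `w`. -/
noncomputable def lieComplexity {α : Type*} (w : ℕ → α) (n : ℕ) : ℕ :=
  Set.ncard {C : Set (List α) | ∃ u : List α, u.length = n ∧
    (∀ i : ℕ, IsFactor w (u.rotate i)) ∧ C = conjClass u}

/-- Iterates of the Fibonacci morphism `0 ↦ 01, 1 ↦ 0` applied to `0`. -/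
def fibIter : ℕ → List ℤ
  | 0 => [0]
  | n + 1 => (fibIter n).flatMap fun a => if a = 0 then [0, 1] else [0]

/-- The Fibonacci word, the fixed point of `0 ↦ 01, 1 ↦ 0` starting with `0`. -/
def fibWord (n : ℕ) : ℤ := (fibIter (n + 1)).getD n 0

/-!
Write `σ` (`fibMorphism`) for the Fibonacci morphism `0 ↦ 01, 1 ↦ 0`, so that `f = σ(f)`, and call
`u` a cyclic factor when all its rotations are factors of `f`. The word `f` contains neither `11`
nor `000`, and `σ` is recognizable: if `σ(w)0` is a factor then so is `w`. Hence every cyclic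
factor `u` of length at least `3` is conjugate to `σ(v)` for a strictly shorter cyclic factor `v`
of length at least `2`, while `σ` maps cyclic factors to cyclic factors. By induction the cyclic
factors of length at least `2` are exactly the conjugates of the prefixes `σᵐ(0)`, of length
`F_{m+2}`, and of their squares, of length `2 F_{m+2}`. For `m ≥ 1` the number
`2 F_{m+2} = F_{m+3} + F_m` lies strictly between two consecutive Fibonacci numbers, so each
length `n ≥ 3` carries at most one conjugacy class; lengths `1` and `2` are checked by hand.
-/

theorem List.IsRotated.flatMap {α β : Type*} {l₁ l₂ : List α} (h : l₁ ~r l₂)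
    (f : α → List β) : l₁.flatMap f ~r l₂.flatMap f := by
  obtain ⟨n, hn, rfl⟩ := List.isRotated_iff_mod.mp h
  rw [List.rotate_eq_drop_append_take hn, List.flatMap_append]
  conv_lhs => rw [← List.take_append_drop n l₁, List.flatMap_append]
  exact List.isRotated_append

section Factors

variable {α : Type*}

def factorAt (w : ℕ → α) (i L : ℕ) : List α := (List.range L).map fun j => w (i + j)

def IsCyclicFactor (w : ℕ → α) (u : List α) : Prop := ∀ i, IsFactor w (u.rotate i)

variable {w : ℕ → α} {u v : List α}

theorem isFactor_iff_exists_eq_factorAt : IsFactor w u ↔ ∃ i, u = factorAt w i u.length :=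
  Iff.rfl

@[simp] theorem length_factorAt (i L : ℕ) : (factorAt w i L).length = L := by simp [factorAt]

@[simp] theorem factorAt_zero (i : ℕ) : factorAt w i 0 = [] := rfl

theorem factorAt_add (i a b : ℕ) :
    factorAt w i (a + b) = factorAt w i a ++ factorAt w (i + a) b := by
  simp [factorAt, List.range_add, Nat.add_assoc]

theorem factorAt_succ (i L : ℕ) : factorAt w i (L + 1) = factorAt w i L ++ [w (i + L)] := by
  simp [factorAt_add]; rfl

theorem factorAt_succ' (i L : ℕ) : factorAt w i (L + 1) = w i :: factorAt w (i + 1) L := by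
  rw [Nat.add_comm, factorAt_add]; rfl

theorem factorAt_prefix_factorAt (i : ℕ) {L L' : ℕ} (h : L ≤ L') :
    factorAt w i L <+: factorAt w i L' := by
  obtain ⟨d, rfl⟩ := Nat.exists_eq_add_of_le h
  rw [factorAt_add]
  exact List.prefix_append _ _

theorem isFactor_factorAt (i L : ℕ) : IsFactor w (factorAt w i L) :=
  ⟨i, by rw [length_factorAt]; rfl⟩

theorem isFactor_nil : IsFactor w [] := ⟨0, rfl⟩

theorem IsFactor.of_infix (hv : IsFactor w v) (h : u <:+: v) : IsFactor w u := by
  obtain ⟨s, t, rfl⟩ := h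
  obtain ⟨i, hi⟩ := hv
  refine ⟨i + s.length, ?_⟩
  simp only [List.length_append, ← factorAt.eq_def, factorAt_add] at hi
  exact (List.append_inj (List.append_inj hi (by simp)).1 (by simp)).2

theorem IsCyclicFactor.isFactor (h : IsCyclicFactor w u) : IsFactor w u := by
  simpa using h 0

theorem IsCyclicFactor.of_isRotated (h : IsCyclicFactor w u) (huv : u ~r v) :
    IsCyclicFactor w v := by
  obtain ⟨n, rfl⟩ := huv
  intro i
  rw [List.rotate_rotate]
  exact h _

theorem mem_conjClass_iff : v ∈ conjClass u ↔ u ~r v :=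
  exists_congr fun _ => eq_comm

theorem conjClass_eq_conjClass_iff : conjClass u = conjClass v ↔ u ~r v := by
  refine ⟨fun h => mem_conjClass_iff.mp (h ▸ mem_conjClass_iff.mpr (List.IsRotated.refl v)),
    fun h => Set.ext fun x => ?_⟩
  simp only [mem_conjClass_iff]
  exact ⟨h.symm.trans, h.trans⟩

theorem lieComplexity_eq_zero {n : ℕ} (h : ∀ u : List α, u.length = n → ¬ IsCyclicFactor w u) :
    lieComplexity w n = 0 := by
  rw [lieComplexity, ← Set.ncard_empty (Set (List α))]
  congr 1
  refine Set.eq_empty_of_forall_notMem ?_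
  rintro _ ⟨u, hlen, hu, -⟩
  exact h u hlen hu

theorem lieComplexity_eq_one {n : ℕ} {u₀ : List α} (h₀ : IsCyclicFactor w u₀)
    (hlen : u₀.length = n) (h : ∀ u : List α, u.length = n → IsCyclicFactor w u → u ~r u₀) :
    lieComplexity w n = 1 := by
  rw [lieComplexity, ← Set.ncard_singleton (conjClass u₀)]
  congr 1
  ext C
  constructor
  · rintro ⟨u, hu, hcyc, rfl⟩
    exact conjClass_eq_conjClass_iff.mpr (h u hu hcyc)
  · rintro rfl
    exact ⟨u₀, hlen, h₀, rfl⟩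

theorem lieComplexity_eq_two {n : ℕ} {u₀ u₁ : List α} (h₀ : IsCyclicFactor w u₀)
    (h₁ : IsCyclicFactor w u₁) (hlen₀ : u₀.length = n) (hlen₁ : u₁.length = n)
    (hne : ¬ u₀ ~r u₁)
    (h : ∀ u : List α, u.length = n → IsCyclicFactor w u → u ~r u₀ ∨ u ~r u₁) :
    lieComplexity w n = 2 := by
  rw [lieComplexity, ← Set.ncard_pair (mt conjClass_eq_conjClass_iff.mp hne)]
  congr 1
  ext C
  constructor
  · rintro ⟨u, hu, hcyc, rfl⟩
    exact (h u hu hcyc).imp conjClass_eq_conjClass_iff.mpr conjClass_eq_conjClass_iff.mpr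
  · rintro (rfl | rfl)
    exacts [⟨u₀, hlen₀, h₀, rfl⟩, ⟨u₁, hlen₁, h₁, rfl⟩]

end Factors

section FibonacciMorphism

def fibSubst (a : ℤ) : List ℤ := if a = 0 then [0, 1] else [0]

def fibMorphism (v : List ℤ) : List ℤ := v.flatMap fibSubst

theorem fibIter_succ (n : ℕ) : fibIter (n + 1) = fibMorphism (fibIter n) := rfl

@[simp] theorem fibMorphism_nil : fibMorphism [] = [] := rfl

@[simp] theorem fibMorphism_cons (a : ℤ) (v : List ℤ) :
    fibMorphism (a :: v) = fibSubst a ++ fibMorphism v := rfl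

@[simp] theorem fibMorphism_append (u v : List ℤ) :
    fibMorphism (u ++ v) = fibMorphism u ++ fibMorphism v :=
  List.flatMap_append

theorem fibMorphism_eq_cons {v : List ℤ} (hv : v ≠ []) : ∃ y, fibMorphism v = 0 :: y := by
  obtain ⟨a, t, rfl⟩ := List.exists_cons_of_ne_nil hv
  rw [fibMorphism_cons, fibSubst]
  split_ifs <;> simp

theorem fibMorphism_append_zero_eq_cons (v : List ℤ) : ∃ y, fibMorphism v ++ [0] = 0 :: y := by
  rcases eq_or_ne v [] with rfl | hv
  · exact ⟨[], rfl⟩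
  · obtain ⟨y, hy⟩ := fibMorphism_eq_cons hv
    exact ⟨y ++ [0], by rw [hy, List.cons_append]⟩

theorem length_fibMorphism (v : List ℤ) : (fibMorphism v).length = v.length + v.count 0 := by
  induction v with
  | nil => rfl
  | cons a v ih =>
    rw [fibMorphism_cons, List.length_append, ih, List.count_cons, fibSubst]
    split_ifs <;> simp_all <;> omega

theorem fibIter_add_two (n : ℕ) : fibIter (n + 2) = fibIter (n + 1) ++ fibIter n := by
  induction n with
  | zero => rfl
  | succ n ih =>
    conv_lhs => rw [fibIter_succ (n + 2), ih, fibMorphism_append]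
    rfl

theorem length_fibIter (n : ℕ) : (fibIter n).length = Nat.fib (n + 2) := by
  induction n using Nat.strong_induction_on with
  | _ n ih =>
    match n with
    | 0 | 1 => rfl
    | n + 2 =>
      rw [fibIter_add_two, List.length_append, ih (n + 1) (by omega), ih n (by omega),
        Nat.fib_add_two (n := n + 2), Nat.add_comm]

theorem fibIter_prefix_fibIter {m n : ℕ} (h : m ≤ n) : fibIter m <+: fibIter n := by
  induction n, h using Nat.le_induction with
  | base => exact List.prefix_refl _
  | succ n _ ih =>
    refine ih.trans ?_
    cases n with
    | zero => exact ⟨[1], rfl⟩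
    | succ n => rw [fibIter_add_two]; exact List.prefix_append _ _

end FibonacciMorphism

section Blocks

theorem fibIter_eq_factorAt (m : ℕ) : fibIter m = factorAt fibWord 0 (fibIter m).length := by
  refine List.ext_getElem (length_factorAt _ _).symm fun j hj _ => ?_
  have hj' : j < (fibIter (j + 1)).length := by
    have := Nat.le_fib_add_one (j + 1 + 2)
    rw [length_fibIter]
    omega
  simp only [factorAt, List.getElem_map, List.getElem_range, Nat.zero_add, fibWord,
    List.getD_eq_getElem _ _ hj']
  rw [(fibIter_prefix_fibIter (le_max_left m (j + 1))).getElem hj,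
    (fibIter_prefix_fibIter (le_max_right m (j + 1))).getElem hj']

theorem eq_factorAt_of_prefix_fibIter {u : List ℤ} {m : ℕ} (h : u <+: fibIter m) :
    u = factorAt fibWord 0 u.length := by
  obtain ⟨t, ht⟩ := h
  have := fibIter_eq_factorAt m
  rw [← ht, List.length_append, factorAt_add] at this
  exact (List.append_inj this (length_factorAt _ _).symm).1

/-- Since `f = σ(f)`, the image of the letter `f q` occupies the positions of `f` from
`blockStart q` on. -/
def blockStart (q : ℕ) : ℕ := (fibMorphism (factorAt fibWord 0 q)).length

theorem fibMorphism_factorAt_zero (q : ℕ) :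
    fibMorphism (factorAt fibWord 0 q) = factorAt fibWord 0 (blockStart q) := by
  have hq : q ≤ (fibIter q).length := by
    have := Nat.le_fib_add_one (q + 2)
    rw [length_fibIter]
    omega
  have hpre : factorAt fibWord 0 q <+: fibIter q := by
    rw [fibIter_eq_factorAt q]
    exact factorAt_prefix_factorAt 0 hq
  exact eq_factorAt_of_prefix_fibIter (m := q + 1) (hpre.flatMap fibSubst)

theorem blockStart_succ (q : ℕ) :
    blockStart (q + 1) = blockStart q + (fibSubst (fibWord q)).length := by
  simp [blockStart, factorAt_succ, fibMorphism]

theorem blockStart_strictMono : StrictMono blockStart :=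
  strictMono_nat_of_lt_succ fun q => by
    rw [blockStart_succ, fibSubst]
    split_ifs <;> simp

theorem fibMorphism_factorAt (q r : ℕ) :
    fibMorphism (factorAt fibWord q r) =
      factorAt fibWord (blockStart q) (blockStart (q + r) - blockStart q) := by
  have hle : blockStart q ≤ blockStart (q + r) := blockStart_strictMono.monotone (by omega)
  have h := fibMorphism_factorAt_zero (q + r)
  rw [factorAt_add, fibMorphism_append, fibMorphism_factorAt_zero, Nat.zero_add,
    ← Nat.add_sub_cancel' hle, factorAt_add, Nat.zero_add] at h
  exact List.append_cancel_left h

theorem factorAt_blockStart (q : ℕ) :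
    factorAt fibWord (blockStart q) (fibSubst (fibWord q)).length = fibSubst (fibWord q) := by
  have h := fibMorphism_factorAt q 1
  rw [blockStart_succ, Nat.add_sub_cancel_left] at h
  simpa [factorAt, fibMorphism] using h.symm

theorem fibWord_blockStart (q : ℕ) : fibWord (blockStart q) = 0 := by
  have h := factorAt_blockStart q
  rw [fibSubst] at h
  split_ifs at h <;> simp_all [factorAt, List.range_succ]

theorem fibWord_blockStart_add_one_of_eq_zero {q : ℕ} (hq : fibWord q = 0) :
    fibWord (blockStart q + 1) = 1 := by
  have h := factorAt_blockStart q
  simp [hq, fibSubst, factorAt, List.range_succ] at h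
  exact h.2

theorem blockStart_succ_of_ne_zero {q : ℕ} (hq : fibWord q ≠ 0) :
    blockStart (q + 1) = blockStart q + 1 := by
  simp [blockStart_succ, fibSubst, hq]

theorem blockStart_succ_of_eq_zero {q : ℕ} (hq : fibWord q = 0) :
    blockStart (q + 1) = blockStart q + 2 := by
  simp [blockStart_succ, fibSubst, hq]

theorem exists_blockStart_le_lt (p : ℕ) : ∃ q, blockStart q ≤ p ∧ p < blockStart (q + 1) := by
  induction p with
  | zero => exact ⟨0, Nat.zero_le _, blockStart_strictMono (Nat.lt_succ_self 0)⟩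
  | succ p ih =>
    obtain ⟨q, hqp, hpq⟩ := ih
    by_cases h : p + 1 < blockStart (q + 1)
    · exact ⟨q, by omega, h⟩
    · have := blockStart_strictMono (by omega : q + 1 < q + 1 + 1)
      exact ⟨q + 1, by omega, by omega⟩

theorem eq_blockStart_or_eq_blockStart_add_one (p : ℕ) :
    ∃ q, p = blockStart q ∨ (fibWord q = 0 ∧ p = blockStart q + 1) := by
  obtain ⟨q, hqp, hpq⟩ := exists_blockStart_le_lt p
  refine ⟨q, ?_⟩
  by_cases hq : fibWord q = 0
  · rw [blockStart_succ_of_eq_zero hq] at hpq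
    omega
  · rw [blockStart_succ_of_ne_zero hq] at hpq
    omega

theorem fibWord_eq_zero_or_eq_one (p : ℕ) : fibWord p = 0 ∨ fibWord p = 1 := by
  obtain ⟨q, rfl | ⟨hq, rfl⟩⟩ := eq_blockStart_or_eq_blockStart_add_one p
  · exact Or.inl (fibWord_blockStart q)
  · exact Or.inr (fibWord_blockStart_add_one_of_eq_zero hq)

theorem fibWord_eq_zero_iff {p : ℕ} : fibWord p = 0 ↔ ∃ q, blockStart q = p := by
  refine ⟨fun hp => ?_, fun ⟨q, hq⟩ => hq ▸ fibWord_blockStart q⟩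
  obtain ⟨q, rfl | ⟨hq, rfl⟩⟩ := eq_blockStart_or_eq_blockStart_add_one p
  · exact ⟨q, rfl⟩
  · simp [fibWord_blockStart_add_one_of_eq_zero hq] at hp

theorem fibWord_blockStart_add_one_eq_one_iff {q : ℕ} :
    fibWord (blockStart q + 1) = 1 ↔ fibWord q = 0 := by
  refine ⟨fun h => ?_, fibWord_blockStart_add_one_of_eq_zero⟩
  by_contra hq
  rw [← blockStart_succ_of_ne_zero hq, fibWord_blockStart] at h
  exact zero_ne_one h

theorem fibWord_add_one_of_eq_one {p : ℕ} (hp : fibWord p = 1) : fibWord (p + 1) = 0 := by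
  obtain ⟨q, rfl | ⟨hq, rfl⟩⟩ := eq_blockStart_or_eq_blockStart_add_one p
  · simp [fibWord_blockStart] at hp
  · rw [Nat.add_assoc, ← blockStart_succ_of_eq_zero hq, fibWord_blockStart]

theorem fibWord_add_two_of_eq_zero {p : ℕ} (hp : fibWord p = 0) (hp1 : fibWord (p + 1) = 0) :
    fibWord (p + 2) = 1 := by
  obtain ⟨q, rfl⟩ := fibWord_eq_zero_iff.mp hp
  obtain ⟨q', hq'⟩ := fibWord_eq_zero_iff.mp hp1
  have hlt : q < q' := blockStart_strictMono.lt_iff_lt.mp (by omega)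
  have hsucc : blockStart (q + 1) = blockStart q + 1 := by
    have : blockStart (q + 1) ≤ blockStart q' := blockStart_strictMono.monotone hlt
    have := blockStart_strictMono (by omega : q < q + 1)
    omega
  have hq : fibWord q = 1 :=
    (fibWord_eq_zero_or_eq_one q).resolve_left fun h => by
      rw [blockStart_succ_of_eq_zero h] at hsucc; omega
  rw [show blockStart q + 2 = blockStart q + 1 + 1 from rfl, ← hsucc]
  exact fibWord_blockStart_add_one_of_eq_zero (fibWord_add_one_of_eq_one hq)

end Blocks

section FactorsOfFibWord

theorem eq_zero_or_eq_one_of_mem_of_isFactor {u : List ℤ} (hu : IsFactor fibWord u) {a : ℤ}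
    (ha : a ∈ u) : a = 0 ∨ a = 1 := by
  obtain ⟨i, hi⟩ := hu
  rw [hi, List.mem_map] at ha
  obtain ⟨j, -, rfl⟩ := ha
  exact fibWord_eq_zero_or_eq_one _

theorem not_isFactor_one_one : ¬ IsFactor fibWord [1, 1] := by
  rw [isFactor_iff_exists_eq_factorAt]
  rintro ⟨i, hi⟩
  simp only [List.length_cons, List.length_nil, factorAt_succ', factorAt_zero,
    List.cons.injEq] at hi
  simp [fibWord_add_one_of_eq_one hi.1.symm] at hi

theorem not_isFactor_zero_zero_zero : ¬ IsFactor fibWord [0, 0, 0] := by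
  rw [isFactor_iff_exists_eq_factorAt]
  rintro ⟨i, hi⟩
  simp only [List.length_cons, List.length_nil, factorAt_succ', factorAt_zero,
    List.cons.injEq] at hi
  simp [fibWord_add_two_of_eq_zero hi.1.symm hi.2.1.symm] at hi

theorem zero_mem_of_isFactor {u : List ℤ} (hu : IsFactor fibWord u) (h2 : 2 ≤ u.length) :
    (0 : ℤ) ∈ u := by
  obtain ⟨a, b, t, rfl⟩ : ∃ a b t, u = a :: b :: t := by
    match u, h2 with
    | a :: b :: t, _ => exact ⟨a, b, t, rfl⟩
  rw [isFactor_iff_exists_eq_factorAt] at hu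
  obtain ⟨i, hi⟩ := hu
  simp only [List.length_cons, factorAt_succ', List.cons.injEq] at hi
  rcases fibWord_eq_zero_or_eq_one i with h | h
  · simp [hi.1, h]
  · simp [hi.2.1, fibWord_add_one_of_eq_one h]

theorem IsFactor.zero_cons_one_cons {y : List ℤ} (h : IsFactor fibWord (1 :: y)) :
    IsFactor fibWord (0 :: 1 :: y) := by
  rw [isFactor_iff_exists_eq_factorAt] at h ⊢
  obtain ⟨i, hi⟩ := h
  simp only [List.length_cons, factorAt_succ', List.cons.injEq] at hi ⊢
  obtain ⟨i, rfl⟩ : ∃ i', i = i' + 1 := by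
    refine Nat.exists_eq_add_one.mpr (Nat.pos_of_ne_zero fun h0 => ?_)
    have : fibWord 0 = 0 := fibWord_blockStart 0
    simp [h0, this] at hi
  refine ⟨i, ⟨?_, hi⟩⟩
  rcases fibWord_eq_zero_or_eq_one i with h | h
  · exact h.symm
  · simp [fibWord_add_one_of_eq_one h] at hi

theorem IsFactor.append_one_zero {y : List ℤ} (h : IsFactor fibWord (y ++ [1])) :
    IsFactor fibWord (y ++ [1, 0]) := by
  rw [isFactor_iff_exists_eq_factorAt] at h ⊢
  obtain ⟨i, hi⟩ := h
  rw [List.length_append, List.length_singleton, factorAt_succ] at hi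
  refine ⟨i, ?_⟩
  rw [List.length_append, show [(1 : ℤ), 0].length = 1 + 1 from rfl, ← Nat.add_assoc,
    factorAt_succ, factorAt_succ, ← hi, ← Nat.add_assoc,
    fibWord_add_one_of_eq_one (List.singleton_inj.mp (List.append_inj' hi rfl).2).symm]
  simp

theorem isFactor_fibMorphism_append_zero {v : List ℤ} (h : IsFactor fibWord v) :
    IsFactor fibWord (fibMorphism v ++ [0]) := by
  rw [isFactor_iff_exists_eq_factorAt] at h
  obtain ⟨q, hq⟩ := h
  rw [hq, fibMorphism_factorAt]
  have hle : blockStart q ≤ blockStart (q + v.length) :=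
    blockStart_strictMono.monotone (Nat.le_add_right _ _)
  convert isFactor_factorAt (w := fibWord) (blockStart q)
    (blockStart (q + v.length) - blockStart q + 1) using 1
  rw [factorAt_succ, Nat.add_sub_cancel' hle, fibWord_blockStart]

theorem isFactor_fibMorphism {v : List ℤ} (h : IsFactor fibWord v) :
    IsFactor fibWord (fibMorphism v) :=
  (isFactor_fibMorphism_append_zero h).of_infix (List.prefix_append _ _).isInfix

theorem isFactor_rotate_one_fibMorphism {v : List ℤ} (h : IsFactor fibWord v) :
    IsFactor fibWord ((fibMorphism v).rotate 1) := by
  rcases eq_or_ne v [] with rfl | hv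
  · exact isFactor_nil
  obtain ⟨y, hy⟩ := fibMorphism_eq_cons hv
  have h0 := isFactor_fibMorphism_append_zero h
  rw [hy, List.cons_append] at h0
  rw [hy, List.rotate_cons_succ, List.rotate_zero]
  exact h0.of_infix (List.suffix_cons _ _).isInfix

theorem eq_factorAt_of_fibMorphism_append_zero {v : List ℤ} (hv : ∀ a ∈ v, a = 0 ∨ a = 1)
    {q : ℕ}
    (h : fibMorphism v ++ [0] = factorAt fibWord (blockStart q) ((fibMorphism v).length + 1)) :
    v = factorAt fibWord q v.length := by
  induction v generalizing q with
  | nil => rfl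
  | cons a t ih =>
    rw [fibMorphism_cons, List.append_assoc, List.length_append, Nat.add_assoc,
      factorAt_add] at h
    obtain ⟨ha, ht⟩ := List.append_inj h (length_factorAt _ _).symm
    have hq : fibWord q = a := by
      rcases hv a List.mem_cons_self with rfl | rfl
      · simp only [fibSubst, if_pos, List.length_cons, List.length_nil, factorAt_succ',
          factorAt_zero, List.cons.injEq] at ha
        exact fibWord_blockStart_add_one_eq_one_iff.mp ha.2.1.symm
      · have h1 : fibWord (blockStart q + 1) ≠ 1 := by
          obtain ⟨y, hy⟩ := fibMorphism_append_zero_eq_cons t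
          rw [hy, factorAt_succ', List.cons.injEq, show (fibSubst 1).length = 1 from rfl] at ht
          rw [← ht.1]
          exact zero_ne_one
        exact (fibWord_eq_zero_or_eq_one q).resolve_left
          (mt fibWord_blockStart_add_one_eq_one_iff.mpr h1)
    have hblk : blockStart q + (fibSubst a).length = blockStart (q + 1) :=
      (hq ▸ blockStart_succ q).symm
    rw [hblk] at ht
    rw [List.length_cons, factorAt_succ', hq,
      ← ih (fun b hb => hv b (List.mem_cons_of_mem _ hb)) ht]

theorem isFactor_of_fibMorphism_append_zero {v : List ℤ} (hv : ∀ a ∈ v, a = 0 ∨ a = 1)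
    (h : IsFactor fibWord (fibMorphism v ++ [0])) : IsFactor fibWord v := by
  rw [isFactor_iff_exists_eq_factorAt] at h
  obtain ⟨i, hi⟩ := h
  obtain ⟨q, rfl⟩ : ∃ q, blockStart q = i := by
    obtain ⟨y, hy⟩ := fibMorphism_append_zero_eq_cons v
    rw [hy, List.length_cons, factorAt_succ', List.cons.injEq] at hi
    exact fibWord_eq_zero_iff.mp hi.1.symm
  rw [List.length_append, List.length_singleton] at hi
  exact ⟨q, eq_factorAt_of_fibMorphism_append_zero hv hi⟩

theorem exists_fibMorphism_eq_zero_cons {x : List ℤ} (hx : IsFactor fibWord (0 :: x)) :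
    ∃ v : List ℤ, (∀ a ∈ v, a = 0 ∨ a = 1) ∧ fibMorphism v = 0 :: x := by
  match x, hx with
  | [], _ => exact ⟨[1], by simp, rfl⟩
  | [b], hx =>
    rcases eq_zero_or_eq_one_of_mem_of_isFactor hx (by simp : b ∈ [0, b]) with rfl | rfl
    · exact ⟨[1, 1], by simp, rfl⟩
    · exact ⟨[0], by simp, rfl⟩
  | b :: c :: z, hx =>
    rcases eq_zero_or_eq_one_of_mem_of_isFactor hx (by simp : b ∈ 0 :: b :: c :: z)
      with rfl | rfl
    · obtain ⟨v, hv, hσ⟩ :=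
        exists_fibMorphism_eq_zero_cons (hx.of_infix (List.suffix_cons _ _).isInfix)
      exact ⟨1 :: v, List.forall_mem_cons.mpr ⟨Or.inr rfl, hv⟩, by rw [fibMorphism_cons, hσ]; rfl⟩
    · obtain rfl : c = 0 := by
        refine (eq_zero_or_eq_one_of_mem_of_isFactor hx
          (by simp : c ∈ 0 :: 1 :: c :: z)).resolve_right ?_
        rintro rfl
        exact not_isFactor_one_one (hx.of_infix ⟨[0], z, rfl⟩)
      obtain ⟨v, hv, hσ⟩ := exists_fibMorphism_eq_zero_cons
        (hx.of_infix ((List.suffix_cons _ _).trans (List.suffix_cons _ _)).isInfix)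
      exact ⟨0 :: v, List.forall_mem_cons.mpr ⟨Or.inl rfl, hv⟩, by rw [fibMorphism_cons, hσ]; rfl⟩
termination_by x.length

end FactorsOfFibWord

section CyclicFactors

theorem exists_length_fibMorphism_take {v : List ℤ} {i : ℕ} (h : i < (fibMorphism v).length) :
    ∃ s, (fibMorphism (v.take s)).length ≤ i ∧ i ≤ (fibMorphism (v.take s)).length + 1 := by
  induction v generalizing i with
  | nil => simp at h
  | cons a t ih =>
    by_cases hi : i ≤ 1
    · exact ⟨0, by simp, by simpa⟩
    · have hlen : (fibSubst a).length ≤ 2 := by unfold fibSubst; split_ifs <;> simp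
      rw [fibMorphism_cons, List.length_append] at h
      obtain ⟨s, hs⟩ := ih (i := i - (fibSubst a).length) (by omega)
      refine ⟨s + 1, ?_⟩
      rw [List.take_succ_cons, fibMorphism_cons, List.length_append]
      omega

-- A rotation of `σ(v)` cuts it at a block boundary or just after the `0` of a block `01`.
theorem exists_isRotated_rotate_fibMorphism_eq (v : List ℤ) (i : ℕ) :
    ∃ v', v ~r v' ∧ ((fibMorphism v).rotate i = fibMorphism v' ∨
      (fibMorphism v).rotate i = (fibMorphism v').rotate 1) := by
  rcases eq_or_ne (fibMorphism v) [] with h | h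
  · exact ⟨v, List.IsRotated.refl v, Or.inl (by rw [h, List.rotate_nil])⟩
  rw [← List.rotate_mod]
  obtain ⟨s, hs⟩ := exists_length_fibMorphism_take (Nat.mod_lt i (List.length_pos_iff.mpr h))
  refine ⟨v.drop s ++ v.take s, ?_, ?_⟩
  · conv_lhs => rw [← List.take_append_drop s v]
    exact List.isRotated_append
  have hrot : (fibMorphism v).rotate (fibMorphism (v.take s)).length =
      fibMorphism (v.drop s ++ v.take s) := by
    have := List.rotate_append_length_eq (fibMorphism (v.take s)) (fibMorphism (v.drop s))
    rwa [← fibMorphism_append, ← fibMorphism_append, List.take_append_drop] at this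
  obtain ⟨d, hd⟩ := Nat.exists_eq_add_of_le hs.1
  rw [hd, ← List.rotate_rotate, hrot]
  rcases (by omega : d = 0 ∨ d = 1) with rfl | rfl
  · exact Or.inl (List.rotate_zero _)
  · exact Or.inr rfl

theorem isCyclicFactor_fibMorphism {v : List ℤ} (h : IsCyclicFactor fibWord v) :
    IsCyclicFactor fibWord (fibMorphism v) := by
  intro i
  obtain ⟨v', hv', hrot | hrot⟩ := exists_isRotated_rotate_fibMorphism_eq v i <;> rw [hrot]
  · exact isFactor_fibMorphism (h.of_isRotated hv').isFactor
  · exact isFactor_rotate_one_fibMorphism (h.of_isRotated hv').isFactor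

theorem isCyclicFactor_fibIter (m : ℕ) : IsCyclicFactor fibWord (fibIter m) := by
  induction m with
  | zero =>
    intro i
    rw [show fibIter 0 = [0] from rfl, List.rotate_singleton]
    exact ⟨0, by decide⟩
  | succ m ih => exact isCyclicFactor_fibMorphism ih

theorem isCyclicFactor_fibIter_append_self (m : ℕ) :
    IsCyclicFactor fibWord (fibIter m ++ fibIter m) := by
  induction m with
  | zero =>
    intro i
    rw [show fibIter 0 ++ fibIter 0 = List.replicate 2 0 from rfl, List.rotate_replicate]
    exact ⟨2, by decide⟩
  | succ m ih =>
    rw [fibIter_succ, ← fibMorphism_append]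
    exact isCyclicFactor_fibMorphism ih

theorem isFactor_of_isCyclicFactor_fibMorphism {w : List ℤ} (hw : ∀ a ∈ w, a = 0 ∨ a = 1)
    (h : IsCyclicFactor fibWord (fibMorphism w)) (h3 : 3 ≤ (fibMorphism w).length) :
    IsFactor fibWord w := by
  refine isFactor_of_fibMorphism_append_zero hw ?_
  rcases w with _ | ⟨a, t⟩
  · simp at h3
  rcases hw a List.mem_cons_self with rfl | rfl
  -- the `1` that starts the rotation `1 σ(t) 0` of `σ(0t)` is preceded by a `0`
  · have h1 := h 1
    rw [fibMorphism_cons, show fibSubst 0 = [0, 1] from rfl, List.cons_append,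
      List.rotate_cons_succ, List.rotate_zero, List.singleton_append, List.cons_append] at h1
    exact h1.zero_cons_one_cons
  rcases List.eq_nil_or_concat' t with rfl | ⟨t', b, rfl⟩
  · simp [fibSubst] at h3
  rcases hw b (by simp) with rfl | rfl
  -- `σ(w)` ends in `1`, which is followed by a `0`
  · have hf := h.isFactor
    rw [← List.cons_append, fibMorphism_append, show fibMorphism [0] = [0] ++ [1] from rfl,
      ← List.append_assoc] at hf ⊢
    simpa using hf.append_one_zero
  -- the rotation `11t'` of `w` has image `000σ(t')`
  · exfalso
    have hrot : (1 :: t') ++ [1] ~r 1 :: 1 :: t' := List.isRotated_append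
    have hf : IsFactor fibWord (fibMorphism (1 :: 1 :: t')) :=
      (h.of_isRotated (hrot.flatMap fibSubst)).isFactor
    rcases eq_or_ne t' [] with rfl | ht'
    · simp [fibSubst] at h3
    obtain ⟨y, hy⟩ := fibMorphism_eq_cons ht'
    refine not_isFactor_zero_zero_zero (hf.of_infix ⟨[], y, ?_⟩)
    rw [fibMorphism_cons, fibMorphism_cons, hy]
    rfl

theorem isCyclicFactor_of_fibMorphism {v : List ℤ} (hv : ∀ a ∈ v, a = 0 ∨ a = 1)
    (h : IsCyclicFactor fibWord (fibMorphism v)) (h3 : 3 ≤ (fibMorphism v).length) :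
    IsCyclicFactor fibWord v := by
  intro i
  have hrot : fibMorphism v ~r fibMorphism (v.rotate i) :=
    (List.IsRotated.forall v i).symm.flatMap fibSubst
  exact isFactor_of_isCyclicFactor_fibMorphism (fun a ha => hv a (List.mem_rotate.mp ha))
    (h.of_isRotated hrot) (hrot.perm.length_eq ▸ h3)

theorem IsCyclicFactor.exists_isRotated_fibMorphism {u : List ℤ}
    (hu : IsCyclicFactor fibWord u) (h3 : 3 ≤ u.length) :
    ∃ v, IsCyclicFactor fibWord v ∧ 2 ≤ v.length ∧ v.length < u.length ∧ u ~r fibMorphism v := by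
  obtain ⟨s, t, rfl⟩ := List.append_of_mem (zero_mem_of_isFactor hu.isFactor (by omega))
  have hrot : s ++ 0 :: t ~r 0 :: (t ++ s) := List.isRotated_append
  obtain ⟨v, hv, hσ⟩ := exists_fibMorphism_eq_zero_cons (hu.of_isRotated hrot).isFactor
  rw [← hσ] at hrot
  have hlen := hrot.perm.length_eq
  have hcyc : IsCyclicFactor fibWord v := isCyclicFactor_of_fibMorphism hv
    (hu.of_isRotated hrot) (by omega)
  rw [length_fibMorphism] at hlen
  have h2 : 2 ≤ v.length := by
    have := List.count_le_length (a := (0 : ℤ)) (l := v)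
    omega
  have hlt : v.length < (s ++ 0 :: t).length := by
    have := List.count_pos_iff.mpr (zero_mem_of_isFactor hcyc.isFactor h2)
    omega
  exact ⟨v, hcyc, h2, hlt, hrot⟩

theorem isRotated_of_isCyclicFactor_of_length_eq_two {u : List ℤ}
    (hu : IsCyclicFactor fibWord u) (h2 : u.length = 2) : u ~r [0, 0] ∨ u ~r [0, 1] := by
  match u, h2 with
  | [a, b], _ =>
    have hf := hu.isFactor
    have ha := eq_zero_or_eq_one_of_mem_of_isFactor hf (by simp : a ∈ [a, b])
    have hb := eq_zero_or_eq_one_of_mem_of_isFactor hf (by simp : b ∈ [a, b])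
    rcases ha with rfl | rfl <;> rcases hb with rfl | rfl
    · exact Or.inl (List.IsRotated.refl _)
    · exact Or.inr (List.IsRotated.refl _)
    · exact Or.inr ⟨1, rfl⟩
    · exact absurd hf not_isFactor_one_one

theorem IsCyclicFactor.exists_isRotated_fibIter {u : List ℤ} (hu : IsCyclicFactor fibWord u)
    (h2 : 2 ≤ u.length) : ∃ m, u ~r fibIter m ∨ u ~r fibIter m ++ fibIter m := by
  induction hn : u.length using Nat.strong_induction_on generalizing u with
  | _ n ih =>
    rcases (by omega : n = 2 ∨ 3 ≤ n) with rfl | h3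
    · rcases isRotated_of_isCyclicFactor_of_length_eq_two hu hn with h00 | h01
      · exact ⟨0, Or.inr h00⟩
      · exact ⟨1, Or.inl h01⟩
    · obtain ⟨v, hv, hv2, hvu, huv⟩ := hu.exists_isRotated_fibMorphism (hn ▸ h3)
      obtain ⟨m, hm | hm⟩ := ih v.length (hn ▸ hvu) hv hv2 rfl
      · exact ⟨m + 1, Or.inl (huv.trans (hm.flatMap fibSubst))⟩
      · refine ⟨m + 1, Or.inr (huv.trans ?_)⟩
        rw [fibIter_succ, ← fibMorphism_append]
        exact hm.flatMap fibSubst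

end CyclicFactors

theorem fib_ne_two_mul_fib {a b : ℕ} (hb : 1 ≤ b) : Nat.fib a ≠ 2 * Nat.fib (b + 2) := by
  intro h
  have h2 : Nat.fib (b + 2) = Nat.fib b + Nat.fib (b + 1) := Nat.fib_add_two
  have h3 : Nat.fib (b + 3) = Nat.fib (b + 1) + Nat.fib (b + 2) := Nat.fib_add_two
  have h4 : Nat.fib (b + 4) = Nat.fib (b + 2) + Nat.fib (b + 3) := Nat.fib_add_two
  have hpos : 0 < Nat.fib b := Nat.fib_pos.mpr hb
  have hpos' : 0 < Nat.fib (b + 1) := Nat.fib_pos.mpr (by omega)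
  -- `2 F(b+2) = F(b+3) + F(b)` lies strictly between `F(b+3)` and `F(b+4)`
  have hlo : b + 3 < a := (Nat.fib_lt_fib (by omega)).mp (by omega)
  have hhi : a < b + 4 := (Nat.fib_lt_fib (by omega)).mp (by omega)
  omega

theorem IsCyclicFactor.isRotated_fibIter {u : List ℤ} (hu : IsCyclicFactor fibWord u) {m : ℕ}
    (hm : 2 ≤ m) (hlen : u.length = Nat.fib (m + 2)) : u ~r fibIter m := by
  have h3 : 3 ≤ u.length := hlen ▸ (Nat.fib_add_two_strictMono.monotone hm : Nat.fib 4 ≤ _)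
  obtain ⟨m', h | h⟩ := hu.exists_isRotated_fibIter (by omega)
  · have := h.perm.length_eq
    rw [hlen, length_fibIter] at this
    rwa [Nat.fib_add_two_strictMono.injective this]
  · have := h.perm.length_eq
    rw [List.length_append, length_fibIter] at this
    rcases Nat.eq_zero_or_pos m' with rfl | hm'
    · rw [show Nat.fib (0 + 2) = 1 from rfl] at this
      omega
    · exact absurd (by omega) (fib_ne_two_mul_fib (a := m + 2) hm')

theorem IsCyclicFactor.isRotated_fibIter_append_self {u : List ℤ}
    (hu : IsCyclicFactor fibWord u) {m : ℕ} (hm : 1 ≤ m) (hlen : u.length = 2 * Nat.fib (m + 2)) :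
    u ~r fibIter m ++ fibIter m := by
  obtain ⟨m', h | h⟩ := hu.exists_isRotated_fibIter
    (hlen ▸ Nat.le_mul_of_pos_right 2 (Nat.fib_pos.mpr (by omega)))
  · have := h.perm.length_eq
    rw [hlen, length_fibIter] at this
    exact absurd this.symm (fib_ne_two_mul_fib hm)
  · have := h.perm.length_eq
    rw [hlen, List.length_append, length_fibIter, ← Nat.two_mul,
      Nat.mul_left_cancel_iff two_pos] at this
    rwa [Nat.fib_add_two_strictMono.injective this]

theorem lieComplexity_fibWord_zero : lieComplexity fibWord 0 = 1 :=
  lieComplexity_eq_one (u₀ := []) (fun i => by rw [List.rotate_nil]; exact isFactor_nil) rfl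
    fun u hu _ => by rw [List.length_eq_zero_iff.mp hu]

theorem lieComplexity_fibWord_one : lieComplexity fibWord 1 = 2 := by
  refine lieComplexity_eq_two (isCyclicFactor_fibIter 0) (u₁ := [1])
    (fun i => by rw [List.rotate_singleton]; exact ⟨1, by decide⟩) rfl rfl
    (by rw [List.isRotated_singleton_iff]; decide) fun u hu hcyc => ?_
  obtain ⟨a, rfl⟩ := List.length_eq_one_iff.mp hu
  rcases eq_zero_or_eq_one_of_mem_of_isFactor hcyc.isFactor List.mem_cons_self with rfl | rfl
  exacts [Or.inl (List.IsRotated.refl _), Or.inr (List.IsRotated.refl _)]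

theorem lieComplexity_fibWord_two : lieComplexity fibWord 2 = 2 :=
  lieComplexity_eq_two (isCyclicFactor_fibIter_append_self 0) (isCyclicFactor_fibIter 1) rfl rfl
    (fun h => by simpa [fibIter] using h.mem_iff.mpr (by simp : (1 : ℤ) ∈ [0, 1]))
    fun _ hu hcyc => isRotated_of_isCyclicFactor_of_length_eq_two hcyc hu

theorem lieComplexity_fibWord_fib {m : ℕ} (hm : 2 ≤ m) :
    lieComplexity fibWord (Nat.fib (m + 2)) = 1 :=
  lieComplexity_eq_one (isCyclicFactor_fibIter m) (length_fibIter m)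
    fun _ hu hcyc => hcyc.isRotated_fibIter hm hu

theorem lieComplexity_fibWord_two_mul_fib {m : ℕ} (hm : 1 ≤ m) :
    lieComplexity fibWord (2 * Nat.fib (m + 2)) = 1 :=
  lieComplexity_eq_one (isCyclicFactor_fibIter_append_self m)
    (by rw [List.length_append, length_fibIter, Nat.two_mul])
    fun _ hu hcyc => hcyc.isRotated_fibIter_append_self hm hu

theorem lieComplexity_fibWord_eq_zero {n : ℕ} (hn : 3 ≤ n)
    (h : ∀ m, n ≠ Nat.fib (m + 2) ∧ n ≠ 2 * Nat.fib (m + 2)) : lieComplexity fibWord n = 0 :=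
  lieComplexity_eq_zero fun u hu hcyc => by
    obtain ⟨m, hm | hm⟩ := hcyc.exists_isRotated_fibIter (by omega)
    · exact (h m).1 (by rw [← hu, hm.perm.length_eq, length_fibIter])
    · refine (h m).2 ?_
      rw [← hu, hm.perm.length_eq, List.length_append, length_fibIter, Nat.two_mul]

open Classical in
/-- The Lie complexity of the Fibonacci word: `2` for `n = 1, 2`; `1` for `n = 0`,
`n = F_k` (`k ≥ 4`) and `n = 2 F_{k-1}` (`k ≥ 4`); `0` otherwise. -/
theorem lieComplexity_fibonacci (n : ℕ) :
    lieComplexity fibWord n =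
      if n = 1 ∨ n = 2 then 2
      else if n = 0 ∨ ∃ k : ℕ, 4 ≤ k ∧ (n = Nat.fib k ∨ n = 2 * Nat.fib (k - 1))
      then 1 else 0 := by
  rcases Nat.lt_or_ge n 3 with hn | hn
  · interval_cases n
    · simp [lieComplexity_fibWord_zero]
    · simp [lieComplexity_fibWord_one]
    · simp [lieComplexity_fibWord_two]
  rw [if_neg (by omega)]
  split_ifs with h
  · obtain ⟨k, hk, rfl | rfl⟩ := h.resolve_left (by omega)
    · rw [show k = k - 2 + 2 by omega]
      exact lieComplexity_fibWord_fib (by omega)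
    · rw [show k - 1 = k - 3 + 2 by omega]
      exact lieComplexity_fibWord_two_mul_fib (by omega)
  · refine lieComplexity_fibWord_eq_zero hn fun m =>
      ⟨fun hm => h (Or.inr ⟨m + 2, ?_, Or.inl hm⟩), fun hm => h (Or.inr ⟨m + 3, ?_, Or.inr hm⟩)⟩
    · have hfib3 : Nat.fib 3 = 2 := rfl
      have : 3 < m + 2 := (Nat.fib_lt_fib (by norm_num)).mp (by omega)
      omega
    · have : 2 < m + 2 := (Nat.fib_lt_fib le_rfl).mp (by rw [Nat.fib_two]; omega)
      omega
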